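/- arXiv:1904.11568 — 3 statements merged into one kernel-verified Lean document; each statement's English description precedes it below -/
import Mathlib

section
/- Let X, D, A be three affinely independent points of the Euclidean plane, let d = dist X D, a = dist X A, l = dist D A, and s = (d + a + l)·(d + a − l)·(d − a + l)·(a + l − d), and let L_p be the line through D with direction A − X (i.e., the affine subspace through D with direction the span of A − X). Then for every e ≥ 0: there exists a point p ∈ L_p with dist p X ≤ e if and only if √s / (2a) ≤ e. (This is the case-splitting condition e_max ≥ ε = √s/(2a) of Theorem 1: the line through the real destination parallel to the attacker's ideal route L_a meets the covert-attack disk of radius e_max around the UAV exactly when e_max ≥ ε.) -/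
/-- Case-splitting condition of Theorem 1: the line through `D` with direction `A - X`
meets the disk of radius `e` around `X` iff `√s / (2a) ≤ e`. -/
theorem stmt_2 (X D A : EuclideanSpace ℝ (Fin 2))
    (h : AffineIndependent ℝ ![X, D, A]) (e : ℝ) (he : 0 ≤ e) :
    (∃ p ∈ AffineSubspace.mk' D (ℝ ∙ (A - X)), dist p X ≤ e) ↔
      Real.sqrt ((dist X D + dist X A + dist D A) * (dist X D + dist X A - dist D A) *
          (dist X D - dist X A + dist D A) * (dist X A + dist D A - dist X D)) /
        (2 * dist X A) ≤ e := by
  classical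
  have hAX : A ≠ X := by
    intro hAX
    have h20 : (2 : Fin 3) = 0 :=
      h.injective (show ![X, D, A] 2 = ![X, D, A] 0 by simp [hAX])
    simp at h20
  set v : EuclideanSpace ℝ (Fin 2) := A - X with hv
  set u : EuclideanSpace ℝ (Fin 2) := D - X with hu
  have hvne : v ≠ 0 := sub_ne_zero.mpr hAX
  set a : ℝ := dist X A with ha
  set d : ℝ := dist X D with hd
  set l : ℝ := dist D A with hl
  have hav : a = ‖v‖ := by rw [ha, hv, dist_eq_norm, ← norm_neg]; congr 1; abel
  have hdu : d = ‖u‖ := by rw [hd, hu, dist_eq_norm, ← norm_neg]; congr 1; abel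
  have hluv : l = ‖u - v‖ := by
    rw [hl, hu, hv, dist_eq_norm]; congr 1; abel
  have hapos : 0 < a := by rw [hav]; exact norm_pos_iff.mpr hvne
  set k : ℝ := inner ℝ u v with hk
  have hl2 : l ^ 2 = d ^ 2 + a ^ 2 - 2 * k := by
    rw [hluv, hdu, hav, hk, ← real_inner_self_eq_norm_sq, ← real_inner_self_eq_norm_sq,
      ← real_inner_self_eq_norm_sq]
    simp only [inner_sub_left, inner_sub_right]
    rw [real_inner_comm v u]; ring
  set s : ℝ := (d + a + l) * (d + a - l) * (d - a + l) * (a + l - d) with hs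
  have hskey : s = 4 * (d ^ 2 * a ^ 2 - k ^ 2) := by
    have h1 : s = ((d + a) ^ 2 - l ^ 2) * (l ^ 2 - (d - a) ^ 2) := by rw [hs]; ring
    rw [h1, hl2]; ring
  -- distance formula for points on the line
  have hdist : ∀ t : ℝ, dist (t • v +ᵥ D) X ^ 2 = d ^ 2 + 2 * t * k + t ^ 2 * a ^ 2 := by
    intro t
    have hpt : (t • v +ᵥ D) - X = u + t • v := by
      simp [hu]; abel
    rw [dist_eq_norm, hpt, ← real_inner_self_eq_norm_sq, hdu, hav, hk,
      ← real_inner_self_eq_norm_sq, ← real_inner_self_eq_norm_sq]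
    simp only [inner_add_left, inner_add_right, inner_smul_left, inner_smul_right,
      RCLike.conj_to_real]
    rw [real_inner_comm v u]; ring
  constructor
  · rintro ⟨p, hp, hpe⟩
    rw [AffineSubspace.mem_mk', Submodule.mem_span_singleton] at hp
    obtain ⟨t, ht⟩ := hp
    have hpeq : p = t • v +ᵥ D := (eq_vadd_iff_vsub_eq _ _ _).mpr ht.symm
    have hsq : s ≤ (2 * a * dist p X) ^ 2 := by
      have := hdist t
      rw [← hpeq] at this
      nlinarith [sq_nonneg (k + t * a ^ 2), hapos]
    have : Real.sqrt s ≤ 2 * a * dist p X := by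
      calc Real.sqrt s ≤ Real.sqrt ((2 * a * dist p X) ^ 2) := Real.sqrt_le_sqrt hsq
        _ = 2 * a * dist p X := Real.sqrt_sq (by positivity)
    calc Real.sqrt s / (2 * a) ≤ dist p X := by
          rw [div_le_iff₀ (by positivity)]; linarith
      _ ≤ e := hpe
  · intro hee
    refine ⟨(-(k / a ^ 2)) • v +ᵥ D, ?_, ?_⟩
    · rw [AffineSubspace.mem_mk', Submodule.mem_span_singleton]
      exact ⟨-(k / a ^ 2), by simp [vsub_eq_sub, vadd_eq_add]⟩
    · have hdsq : dist ((-(k / a ^ 2)) • v +ᵥ D) X ^ 2 = s / (4 * a ^ 2) := by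
        rw [hdist, hskey]; field_simp; ring
      have hdx : dist ((-(k / a ^ 2)) • v +ᵥ D) X = Real.sqrt (s / (4 * a ^ 2)) := by
        rw [← hdsq, Real.sqrt_sq dist_nonneg]
      have hsnn : 0 ≤ s := by
        have h0 : 0 ≤ s / (4 * a ^ 2) := hdsq ▸ sq_nonneg _
        by_contra hn
        push_neg at hn
        have : s / (4 * a ^ 2) < 0 := div_neg_of_neg_of_pos hn (by positivity)
        linarith
      have h4 : Real.sqrt (4 * a ^ 2) = 2 * a := by
        rw [show (4 : ℝ) * a ^ 2 = (2 * a) ^ 2 by ring, Real.sqrt_sq (by positivity)]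
      rw [hdx, Real.sqrt_div hsnn, h4]
      exact hee
end

section
/- Let X and D be points of the Euclidean plane with 0 < e < d where d = dist X D. Then for every point p with dist p X = e, the (undirected) angle ∠ p D X at the vertex D satisfies ∠ p D X ≤ Real.arcsin (e / d). (This is the key geometric fact behind Case 2 of Theorem 1: when the parallel line L_p misses the covert-attack circle, the direction of the line from the real destination D to any point p on the circle of radius e_max around the UAV's location X deviates from the direction of DX by an angle at most arcsin(e_max/d), so the attacker's objective |γ̂ − γ^a| is minimized on a line through D tangent to the circle.) -/
/-- Case 2 of Theorem 1: for any point `p` on the circle of radius `e` around `X`,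
the angle at `D` between `p` and `X` is at most `arcsin (e / d)`. -/
theorem stmt_4 (X D : EuclideanSpace ℝ (Fin 2)) (e : ℝ) (he : 0 < e)
    (hed : e < dist X D) :
    ∀ p : EuclideanSpace ℝ (Fin 2), dist p X = e →
      EuclideanGeometry.angle p D X ≤ Real.arcsin (e / dist X D) := by
  intro p hp
  set d : ℝ := dist X D with hd'
  have hd : 0 < d := he.trans hed
  have hr : 0 < dist p D := by
    have h1 : d ≤ dist X p + dist p D := dist_triangle X p D
    have h2 : dist X p = e := by rw [dist_comm]; exact hp
    linarith
  set r : ℝ := dist p D with hrdef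
  set θ := EuclideanGeometry.angle p D X with hθ
  have hlaw := EuclideanGeometry.law_cos p D X
  have hcos : Real.cos θ = (r * r + d * d - e * e) / (2 * r * d) := by
    have h2 : dist X D = d := rfl
    field_simp
    nlinarith [hlaw, hp, dist_comm X D]
  set s : ℝ := Real.sqrt (d ^ 2 - e ^ 2) with hs
  have hs2 : s ^ 2 = d ^ 2 - e ^ 2 := Real.sq_sqrt (by nlinarith)
  have hs0 : 0 ≤ s := Real.sqrt_nonneg _
  have hkey : s / d ≤ Real.cos θ := by
    rw [hcos, div_le_div_iff₀ hd (by positivity)]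
    nlinarith [sq_nonneg (r - s)]
  have hcosarcsin : Real.cos (Real.arcsin (e / d)) = s / d := by
    rw [Real.cos_arcsin,
      show (1 : ℝ) - (e / d) ^ 2 = (d ^ 2 - e ^ 2) / d ^ 2 by field_simp,
      Real.sqrt_div (by nlinarith) _, Real.sqrt_sq hd.le]
  -- conclude via antitonicity of cos on [0, π]
  by_contra hlt
  push_neg at hlt
  have harc0 : 0 ≤ Real.arcsin (e / d) := Real.arcsin_nonneg.2 (by positivity)
  have hθπ : θ ≤ Real.pi := EuclideanGeometry.angle_le_pi _ _ _
  have := Real.strictAntiOn_cos ⟨harc0, le_of_lt (lt_of_lt_of_le hlt hθπ)⟩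
    ⟨harc0.trans hlt.le, hθπ⟩ hlt
  rw [hcosarcsin] at this
  linarith
end

section
/- Consider a dynamic game over τ time steps with finite nonempty action types D (defender) and A (attacker), per-step costs u^a, u^d : Fin τ → D → A → ℝ, accumulated costs J^a(β^d, β^a) = ∑_t u^a t (β^d t) (β^a t) and J^d(β^d, β^a) = ∑_t u^d t (β^d t) (β^a t), and reaction set R = {(β^d, β^a) : β^a minimizes J^a(β^d, ·) over attacker strategies}. Then the defender's Stackelberg value decomposes over time steps: the minimum of J^d over R equals ∑_t (minimum of u^d t d a over all pairs (d, a) ∈ D × A such that a minimizes u^a t d over A). (This value decomposition is the content of Theorem 2 and reduces the complexity of computing the equilibrium from exponential to linear in τ.) -/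
/-- Theorem 2 (value form): the defender's Stackelberg value of the dynamic game
decomposes as the sum over time steps of the static Stackelberg stage values. -/
theorem stmt_12 (τ : ℕ) (D A : Type) [Fintype D] [Fintype A] [Nonempty D] [Nonempty A]
    (ua ud : Fin τ → D → A → ℝ) :
    sInf {x : ℝ | ∃ (βd : Fin τ → D) (βa : Fin τ → A),
        (∀ βa' : Fin τ → A, ∑ t, ua t (βd t) (βa t) ≤ ∑ t, ua t (βd t) (βa' t)) ∧
        x = ∑ t, ud t (βd t) (βa t)} =
      ∑ t : Fin τ, sInf {x : ℝ | ∃ (d : D) (a : A),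
        (∀ a' : A, ua t d a ≤ ua t d a') ∧ x = ud t d a} := by
  classical
  set T : Fin τ → Set ℝ := fun t => {x : ℝ | ∃ (d : D) (a : A),
      (∀ a' : A, ua t d a ≤ ua t d a') ∧ x = ud t d a} with hT
  set S : Set ℝ := {x : ℝ | ∃ (βd : Fin τ → D) (βa : Fin τ → A),
      (∀ βa' : Fin τ → A, ∑ t, ua t (βd t) (βa t) ≤ ∑ t, ua t (βd t) (βa' t)) ∧
      x = ∑ t, ud t (βd t) (βa t)} with hS
  have hTfin : ∀ t, (T t).Finite := fun t =>
    Set.Finite.subset (Set.finite_range (fun p : D × A => ud t p.1 p.2))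
      (by rintro x ⟨d, a, -, rfl⟩; exact ⟨(d, a), rfl⟩)
  have hSfin : S.Finite :=
    Set.Finite.subset
      (Set.finite_range (fun p : (Fin τ → D) × (Fin τ → A) => ∑ t, ud t (p.1 t) (p.2 t)))
      (by rintro x ⟨βd, βa, -, rfl⟩; exact ⟨(βd, βa), rfl⟩)
  have hTne : ∀ t, (T t).Nonempty := by
    intro t
    obtain ⟨d⟩ := ‹Nonempty D›
    obtain ⟨a, ha⟩ := Finite.exists_min (ua t d)
    exact ⟨ud t d a, d, a, ha, rfl⟩
  have hmem : ∀ t, sInf (T t) ∈ T t := fun t => Set.Nonempty.csInf_mem (hTne t) (hTfin t)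
  simp only [hT, Set.mem_setOf_eq] at hmem
  choose d a hbest hval using hmem
  -- the strategy pair built from stage minimizers lies in S
  have hRmem : (∑ t, sInf (T t)) ∈ S := by
    refine ⟨d, a, fun βa' => Finset.sum_le_sum fun t _ => hbest t (βa' t), ?_⟩
    exact Finset.sum_congr rfl fun t _ => hval t
  apply le_antisymm
  · exact csInf_le hSfin.bddBelow hRmem
  · refine le_csInf ⟨_, hRmem⟩ ?_
    rintro x ⟨βd, βa, hb, rfl⟩
    refine Finset.sum_le_sum fun t _ => ?_
    have hpt : ∀ a' : A, ua t (βd t) (βa t) ≤ ua t (βd t) a' := by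
      intro a'
      have h := hb (Function.update βa t a')
      have hupd : (fun t' => ua t' (βd t') (Function.update βa t a' t'))
          = Function.update (fun t' => ua t' (βd t') (βa t')) t (ua t (βd t) a') := by
        funext t'
        by_cases ht : t' = t
        · subst ht; simp
        · simp [Function.update_of_ne ht]
      rw [show (∑ t', ua t' (βd t') (Function.update βa t a' t'))
            = ∑ t', Function.update (fun t' => ua t' (βd t') (βa t')) t (ua t (βd t) a') t'
          from by rw [← hupd],
        Finset.sum_update_of_mem (Finset.mem_univ t)] at h
      have hsplit : (∑ t', ua t' (βd t') (βa t'))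
          = ua t (βd t) (βa t) + ∑ t' ∈ Finset.univ.erase t, ua t' (βd t') (βa t') :=
        (Finset.add_sum_erase _ _ (Finset.mem_univ t)).symm
      rw [hsplit, Finset.sdiff_singleton_eq_erase] at h
      linarith
    exact csInf_le (hTfin t).bddBelow ⟨βd t, βa t, hpt, rfl⟩
end
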